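/- Conversely, if {P_j} are positive semidefinite operators on H_out ⊗ H_in such that Σ_j Tr[E P_j] = 1 for every Choi operator E of a channel, then Σ_j P_j = I_{H_out} ⊗ σ for some density matrix σ on H_in. -/

import Mathlib

/-!
Let `C = ∑ j, P j`. The maximally mixed Choi operator `E₀ = (1 / d_out) • 1` is positive definite,
so `E₀ + t • H` is again a channel Choi operator for every Hermitian `H` with `ptrFst H = 0` and
small `t > 0`; hence `Tr[H C] = 0` on that real subspace, and by splitting into Hermitian parts on
all of `ker ptrFst`. Testing against matrix units `|a m⟩⟨b n|` with `a ≠ b`, and against differences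
`|a n⟩⟨a m| - |a₀ n⟩⟨a₀ m|`, shows that `C = 1 ⊗ σ` with `σ` the `a₀`-diagonal block of `C`, and
`Tr[E₀ C] = 1` gives `Tr σ = 1`.
-/

open Matrix Kronecker BigOperators ComplexOrder

/-- Partial trace over the first tensor factor. -/
noncomputable def ptrFst {o i : Type*} [Fintype o] (M : Matrix (o × i) (o × i) ℂ) :
    Matrix i i ℂ :=
  Matrix.of fun a b => ∑ k, M (k, a) (k, b)

/-- Partial trace over the second tensor factor. -/
noncomputable def ptrSnd {o i : Type*} [Fintype i] (M : Matrix (o × i) (o × i) ℂ) :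
    Matrix o o ℂ :=
  Matrix.of fun a b => ∑ k, M (a, k) (b, k)

/-- Choi operator of a linear map between matrix algebras. -/
noncomputable def choi {i o : Type*} [Fintype i] [DecidableEq i]
    (E : Matrix i i ℂ →ₗ[ℂ] Matrix o o ℂ) : Matrix (o × i) (o × i) ℂ :=
  ∑ m, ∑ n, (E (Matrix.single m n 1)) ⊗ₖ (Matrix.single m n 1)

/-- Complete positivity, expressed via existence of a Kraus decomposition
(equivalent to the usual definition in finite dimensions). -/
def IsCP {i o : Type*} [Fintype i] [Fintype o]
    (E : Matrix i i ℂ →ₗ[ℂ] Matrix o o ℂ) : Prop :=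
  ∃ (k : ℕ) (K : Fin k → Matrix o i ℂ), ∀ X, E X = ∑ j, K j * X * (K j)ᴴ

section PartialTrace

variable {o i : Type*} [Fintype o]

lemma ptrFst_add (M N : Matrix (o × i) (o × i) ℂ) : ptrFst (M + N) = ptrFst M + ptrFst N := by
  ext; simp [ptrFst, Finset.sum_add_distrib]

lemma ptrFst_sub (M N : Matrix (o × i) (o × i) ℂ) : ptrFst (M - N) = ptrFst M - ptrFst N := by
  ext; simp [ptrFst]

lemma ptrFst_smul (c : ℂ) (M : Matrix (o × i) (o × i) ℂ) : ptrFst (c • M) = c • ptrFst M := by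
  ext; simp [ptrFst, Finset.mul_sum]

lemma ptrFst_conjTranspose (M : Matrix (o × i) (o × i) ℂ) : ptrFst Mᴴ = (ptrFst M)ᴴ := by
  ext; simp [ptrFst]

lemma ptrFst_kronecker (A : Matrix o o ℂ) (B : Matrix i i ℂ) : ptrFst (A ⊗ₖ B) = A.trace • B := by
  ext; simp [ptrFst, trace, Finset.sum_mul]

variable [DecidableEq o] [DecidableEq i]

lemma ptrFst_one : ptrFst (1 : Matrix (o × i) (o × i) ℂ) = (Fintype.card o : ℂ) • 1 := by
  rw [← one_kronecker_one, ptrFst_kronecker, trace_one]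

lemma ptrFst_single_same (a : o) (m n : i) (c : ℂ) :
    ptrFst (single (a, m) (a, n) c) = single m n c := by
  rw [← one_mul c, ← single_kronecker_single, ptrFst_kronecker, trace_single_eq_same, one_smul,
    one_mul]

lemma ptrFst_single_of_ne {a b : o} (hab : a ≠ b) (m n : i) (c : ℂ) :
    ptrFst (single (a, m) (b, n) c) = 0 := by
  rw [← one_mul c, ← single_kronecker_single, ptrFst_kronecker, trace_single_eq_of_ne _ _ _ hab,
    zero_smul]

end PartialTrace

open scoped Matrix.Norms.L2Operator MatrixOrder in
lemma Matrix.IsHermitian.exists_posSemidef_smul_one_add {n : Type*} [Fintype n] [DecidableEq n]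
    {H : Matrix n n ℂ} (hH : H.IsHermitian) :
    ∃ c : ℝ, 0 < c ∧ ((c : ℂ) • 1 + H).PosSemidef := by
  refine ⟨‖H‖ + 1, by positivity, ?_⟩
  have h := hH.isSelfAdjoint.neg_algebraMap_norm_le_self
  rw [neg_le_iff_add_nonneg, nonneg_iff_posSemidef, Algebra.algebraMap_eq_smul_one] at h
  have hsplit : ((‖H‖ + 1 : ℝ) : ℂ) • (1 : Matrix n n ℂ) + H = 1 + (H + ‖H‖ • 1) := by
    rw [Complex.ofReal_add, add_smul, Complex.ofReal_one, one_smul, ← Complex.coe_smul]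
    abel
  exact hsplit ▸ PosSemidef.one.add h

def IsChannelNormalized {o i : Type*} [Fintype o] [Fintype i] [DecidableEq i]
    (C : Matrix (o × i) (o × i) ℂ) : Prop :=
  ∀ E : Matrix (o × i) (o × i) ℂ, E.PosSemidef → ptrFst E = 1 → (E * C).trace = 1

section Annihilator

variable {o i : Type*} [Fintype o] [DecidableEq o] [Fintype i] [DecidableEq i]

namespace IsChannelNormalized

variable {C : Matrix (o × i) (o × i) ℂ}

lemma trace_eq_card [Nonempty o] (hC : IsChannelNormalized C) :
    C.trace = Fintype.card o := by
  have hd : (Fintype.card o : ℂ) ≠ 0 := by simp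
  have h := hC ((Fintype.card o : ℂ)⁻¹ • 1) (PosSemidef.one.smul (by positivity))
    (by rw [ptrFst_smul, ptrFst_one, smul_smul, inv_mul_cancel₀ hd, one_smul])
  rw [smul_mul, one_mul, trace_smul, smul_eq_mul] at h
  field_simp at h
  exact h

lemma trace_mul_eq_zero_of_isHermitian [Nonempty o] (hC : IsChannelNormalized C)
    {H : Matrix (o × i) (o × i) ℂ} (hH : H.IsHermitian) (hH0 : ptrFst H = 0) :
    (H * C).trace = 0 := by
  obtain ⟨c, hc, hpos⟩ := hH.exists_posSemidef_smul_one_add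
  have hd : (Fintype.card o : ℂ) ≠ 0 := by simp
  have hc' : (c : ℂ) ≠ 0 := by exact_mod_cast hc.ne'
  have h := hC (((c : ℂ) * Fintype.card o)⁻¹ • ((c : ℂ) • 1 + H)) (hpos.smul (by positivity))
    (by rw [ptrFst_smul, ptrFst_add, hH0, add_zero, ptrFst_smul, ptrFst_one, smul_smul,
      smul_smul, mul_assoc, inv_mul_cancel₀ (mul_ne_zero hc' hd), one_smul])
  rw [smul_mul, add_mul, smul_mul, one_mul, trace_smul, trace_add, trace_smul, hC.trace_eq_card,
    smul_eq_mul, smul_eq_mul] at h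
  field_simp at h
  linear_combination h

lemma trace_mul_eq_zero [Nonempty o] (hC : IsChannelNormalized C)
    {H : Matrix (o × i) (o × i) ℂ} (hH0 : ptrFst H = 0) : (H * C).trace = 0 := by
  have hre := hC.trace_mul_eq_zero_of_isHermitian (H := H + Hᴴ) (by simp [IsHermitian, add_comm])
    (by rw [ptrFst_add, ptrFst_conjTranspose, hH0, conjTranspose_zero, add_zero])
  have him := hC.trace_mul_eq_zero_of_isHermitian (H := Complex.I • (H - Hᴴ))
    (by rw [IsHermitian, conjTranspose_smul, conjTranspose_sub, conjTranspose_conjTranspose,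
      Complex.star_def, Complex.conj_I, neg_smul, ← smul_neg, neg_sub])
    (by rw [ptrFst_smul, ptrFst_sub, ptrFst_conjTranspose, hH0, conjTranspose_zero, sub_zero,
      smul_zero])
  rw [add_mul, trace_add] at hre
  rw [smul_mul, sub_mul, trace_smul, trace_sub, smul_eq_mul] at him
  linear_combination (hre - Complex.I * him + ((H * C).trace - (Hᴴ * C).trace) * Complex.I_sq) / 2

end IsChannelNormalized

lemma eq_one_kronecker_submatrix_of_trace_mul_eq_zero {C : Matrix (o × i) (o × i) ℂ}
    (hC : ∀ H, ptrFst H = 0 → (H * C).trace = 0) (a₀ : o) :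
    C = 1 ⊗ₖ C.submatrix (a₀, ·) (a₀, ·) := by
  ext ⟨a, m⟩ ⟨b, n⟩
  rw [kroneckerMap_apply, submatrix_apply]
  obtain rfl | hab := eq_or_ne a b
  · have h := hC (single (a, n) (a, m) 1 - single (a₀, n) (a₀, m) 1)
      (by rw [ptrFst_sub, ptrFst_single_same, ptrFst_single_same, sub_self])
    rw [sub_mul, trace_sub, trace_single_mul, trace_single_mul, one_smul, one_smul,
      sub_eq_zero] at h
    rw [one_apply_eq, one_mul, h]
  · have h := hC (single (b, n) (a, m) 1) (ptrFst_single_of_ne hab.symm _ _ _)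
    rw [trace_single_mul, one_smul] at h
    rw [one_apply_ne hab, zero_mul, h]

end Annihilator

/-- Conversely, if `{P j} ≥ 0` and `Σ_j Tr[E P_j] = 1` for every channel
Choi operator `E`, then `Σ_j P j = I ⊗ σ` for some density matrix `σ`. -/
theorem tester_normalization_converse {i o : Type*}
    [Fintype i] [DecidableEq i] [Fintype o] [DecidableEq o] [Nonempty o]
    {k : ℕ} (P : Fin k → Matrix (o × i) (o × i) ℂ)
    (hP : ∀ j, (P j).PosSemidef)
    (hnorm : ∀ E : Matrix (o × i) (o × i) ℂ, E.PosSemidef → ptrFst E = 1 →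
      ∑ j, (E * P j).trace = 1) :
    ∃ σ : Matrix i i ℂ, σ.PosSemidef ∧ σ.trace = 1 ∧
      ∑ j, P j = (1 : Matrix o o ℂ) ⊗ₖ σ := by
  obtain ⟨a₀⟩ := ‹Nonempty o›
  set C := ∑ j, P j
  have hC : IsChannelNormalized C := fun E hE hE1 => by
    rw [Finset.mul_sum, trace_sum]
    exact hnorm E hE hE1
  have hCσ := eq_one_kronecker_submatrix_of_trace_mul_eq_zero (fun _ => hC.trace_mul_eq_zero) a₀
  refine ⟨_, (posSemidef_sum _ fun j _ => hP j).submatrix _, ?_, hCσ⟩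
  have htr := hC.trace_eq_card
  rw [hCσ, trace_kronecker, trace_one] at htr
  exact mul_left_cancel₀ (by simp) (htr.trans (mul_one _).symm)
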